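/- For all parameters A, B, C ∈ ℂ with (C;q)_n ≠ 0 for all n, and all x, y ∈ ℂ with |x| < 1 and |y| < 1, the bibasic Humbert function satisfies (1−B)·Φ₁(A,q₁B;C;q,q₁;x,y) + B·Φ₁(A,B;C;q,q₁;q₁x,y) = Φ₁(A,B;C;q,q₁;x,y). (Equation (2.10), with B = q₁^b.) -/

import Mathlib

open Complex

/-- The q-shifted factorial (z;q)_n = prod_{r=0}^{n-1} (1 - z q^r). -/
noncomputable def qPoch (q z : ℂ) (n : ℕ) : ℂ :=
  ∏ r ∈ Finset.range n, (1 - z * q ^ r)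

/-- The bibasic Humbert hypergeometric function Φ₁ on two independent bases q and q₁. -/
noncomputable def Phi1 (q q1 A B C x y : ℂ) : ℂ :=
  ∑' p : ℕ × ℕ,
    qPoch q A (p.1 + p.2) * qPoch q1 B p.1 /
      (qPoch q C (p.1 + p.2) * qPoch q1 q1 p.1 * qPoch q q p.2) * x ^ p.1 * y ^ p.2

/-- The Jackson p-derivative. -/
noncomputable def jackson (p : ℂ) (f : ℂ → ℂ) (x : ℂ) : ℂ :=
  (f x - f (p * x)) / ((1 - p) * x)

/-!
Writing `(B;q₁)_{ℓ+1}` once as `(B;q₁)_ℓ (1 - B q₁^ℓ)` and once as `(1 - B) (q₁B;q₁)_ℓ` gives the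
termwise identity `(1 - B) (q₁B;q₁)_ℓ + B q₁^ℓ (B;q₁)_ℓ = (B;q₁)_ℓ`, so the relation holds coefficient
by coefficient. The series may be added termwise because they converge absolutely: each
`(z;q)_n` converges to the infinite product `(z;q)_∞`, which is nonzero when no `(z;q)_n` vanishes,
so the coefficients of `Φ₁` are bounded and dominated by a double geometric series.
-/

open Filter Topology

lemma exists_norm_le_of_tendsto {E : Type*} [SeminormedAddCommGroup E] {u : ℕ → E} {L : E}
    (hu : Tendsto u atTop (𝓝 L)) : ∃ M, ∀ n, ‖u n‖ ≤ M := by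
  obtain ⟨M, hM⟩ := isBounded_iff_forall_norm_le.1 (Metric.isBounded_range_of_tendsto u hu)
  exact ⟨M, fun n ↦ hM _ (Set.mem_range_self n)⟩

lemma qPoch_succ (q z : ℂ) (n : ℕ) : qPoch q z (n + 1) = qPoch q z n * (1 - z * q ^ n) :=
  Finset.prod_range_succ _ n

lemma qPoch_succ' (q z : ℂ) (n : ℕ) : qPoch q z (n + 1) = (1 - z) * qPoch q (q * z) n := by
  simp only [qPoch, Finset.prod_range_succ', pow_succ, pow_zero, mul_one]
  rw [mul_comm]
  congr 1
  exact Finset.prod_congr rfl fun r _ ↦ by ring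

lemma one_sub_mul_qPoch_mul (q B : ℂ) (n : ℕ) :
    (1 - B) * qPoch q (q * B) n = qPoch q B n * (1 - B * q ^ n) := by
  rw [← qPoch_succ', qPoch_succ]

section QPochhammer

variable {q : ℂ}

lemma summable_norm_mul_pow (hq : ‖q‖ < 1) (z : ℂ) : Summable fun r : ℕ ↦ ‖-(z * q ^ r)‖ := by
  simpa [norm_mul, norm_pow] using
    (summable_geometric_of_lt_one (norm_nonneg q) hq).mul_left ‖z‖

lemma tendsto_qPoch (hq : ‖q‖ < 1) (z : ℂ) :
    Tendsto (qPoch q z) atTop (𝓝 (∏' r : ℕ, (1 - z * q ^ r))) := by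
  have h := multipliable_one_add_of_summable (summable_norm_mul_pow hq z)
  simp only [← sub_eq_add_neg] at h
  exact h.tendsto_prod_tprod_nat

lemma tprod_one_sub_mul_pow_ne_zero (hq : ‖q‖ < 1) {z : ℂ} (hz : ∀ n, qPoch q z n ≠ 0) :
    ∏' r : ℕ, (1 - z * q ^ r) ≠ 0 := by
  have hfactor (r : ℕ) : 1 + -(z * q ^ r) ≠ 0 := by
    have := hz (r + 1)
    rw [qPoch_succ] at this
    simpa [← sub_eq_add_neg] using right_ne_zero_of_mul this
  simpa [← sub_eq_add_neg] using
    tprod_one_add_ne_zero_of_summable hfactor (summable_norm_mul_pow hq z)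

lemma exists_norm_qPoch_le (hq : ‖q‖ < 1) (z : ℂ) : ∃ M, ∀ n, ‖qPoch q z n‖ ≤ M :=
  exists_norm_le_of_tendsto (tendsto_qPoch hq z)

lemma exists_norm_inv_qPoch_le (hq : ‖q‖ < 1) {z : ℂ} (hz : ∀ n, qPoch q z n ≠ 0) :
    ∃ M, ∀ n, ‖(qPoch q z n)⁻¹‖ ≤ M :=
  exists_norm_le_of_tendsto ((tendsto_qPoch hq z).inv₀ (tprod_one_sub_mul_pow_ne_zero hq hz))

lemma qPoch_self_ne_zero (hq : ‖q‖ < 1) (n : ℕ) : qPoch q q n ≠ 0 := by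
  refine Finset.prod_ne_zero_iff.2 fun r _ h ↦ ?_
  have hlt : ‖q * q ^ r‖ < 1 := by
    rw [← pow_succ', norm_pow]
    exact pow_lt_one₀ (norm_nonneg q) hq r.succ_ne_zero
  rw [← sub_eq_zero.1 h, norm_one] at hlt
  exact lt_irrefl _ hlt

end QPochhammer

noncomputable def phi1Coeff (q q1 A B C : ℂ) (p : ℕ × ℕ) : ℂ :=
  qPoch q A (p.1 + p.2) * qPoch q1 B p.1 /
    (qPoch q C (p.1 + p.2) * qPoch q1 q1 p.1 * qPoch q q p.2)

lemma phi1Coeff_contiguous (q q1 A B C : ℂ) (p : ℕ × ℕ) :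
    (1 - B) * phi1Coeff q q1 A (q1 * B) C p + B * q1 ^ p.1 * phi1Coeff q q1 A B C p =
      phi1Coeff q q1 A B C p := by
  simp only [phi1Coeff]
  linear_combination qPoch q A (p.1 + p.2) /
      (qPoch q C (p.1 + p.2) * qPoch q1 q1 p.1 * qPoch q q p.2) *
    one_sub_mul_qPoch_mul q1 B p.1

section Phi1

variable {q q1 A B C x y : ℂ}

lemma Phi1_eq_tsum_phi1Coeff :
    Phi1 q q1 A B C x y = ∑' p : ℕ × ℕ, phi1Coeff q q1 A B C p * x ^ p.1 * y ^ p.2 :=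
  rfl

lemma exists_norm_phi1Coeff_le (hq : ‖q‖ < 1) (hq1 : ‖q1‖ < 1) (hC : ∀ n, qPoch q C n ≠ 0) :
    ∃ K, ∀ p, ‖phi1Coeff q q1 A B C p‖ ≤ K := by
  obtain ⟨MA, hMA⟩ := exists_norm_qPoch_le hq A
  obtain ⟨MB, hMB⟩ := exists_norm_qPoch_le hq1 B
  obtain ⟨MC, hMC⟩ := exists_norm_inv_qPoch_le hq hC
  obtain ⟨M1, hM1⟩ := exists_norm_inv_qPoch_le hq1 (qPoch_self_ne_zero hq1)
  obtain ⟨M, hM⟩ := exists_norm_inv_qPoch_le hq (qPoch_self_ne_zero hq)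
  refine ⟨MA * MB * (MC * M1 * M), fun p ↦ ?_⟩
  rw [phi1Coeff, div_eq_mul_inv, mul_inv, mul_inv, norm_mul, norm_mul, norm_mul, norm_mul]
  have hMA0 : 0 ≤ MA := (norm_nonneg _).trans (hMA 0)
  have hMB0 : 0 ≤ MB := (norm_nonneg _).trans (hMB 0)
  have hMC0 : 0 ≤ MC := (norm_nonneg _).trans (hMC 0)
  have hM10 : 0 ≤ M1 := (norm_nonneg _).trans (hM1 0)
  gcongr
  exacts [hMA _, hMB _, hMC _, hM1 _, hM _]

lemma summable_mul_pow_mul_pow {c : ℕ × ℕ → ℂ} {K : ℝ} (hc : ∀ p, ‖c p‖ ≤ K)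
    (hx : ‖x‖ < 1) (hy : ‖y‖ < 1) : Summable fun p : ℕ × ℕ ↦ c p * x ^ p.1 * y ^ p.2 := by
  have hgeom : Summable fun p : ℕ × ℕ ↦ K * (‖x‖ ^ p.1 * ‖y‖ ^ p.2) :=
    ((summable_geometric_of_lt_one (norm_nonneg x) hx).mul_of_nonneg
      (summable_geometric_of_lt_one (norm_nonneg y) hy) (fun _ ↦ by positivity)
      fun _ ↦ by positivity).mul_left K
  refine hgeom.of_norm_bounded fun p ↦ ?_
  rw [norm_mul, norm_mul, norm_pow, norm_pow, mul_assoc]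
  gcongr
  exact hc p

lemma summable_phi1Coeff_mul_pow_mul_pow (hq : ‖q‖ < 1) (hq1 : ‖q1‖ < 1)
    (hC : ∀ n, qPoch q C n ≠ 0) (hx : ‖x‖ < 1) (hy : ‖y‖ < 1) :
    Summable fun p : ℕ × ℕ ↦ phi1Coeff q q1 A B C p * x ^ p.1 * y ^ p.2 :=
  have ⟨_, hK⟩ := exists_norm_phi1Coeff_le (A := A) (B := B) hq hq1 hC
  summable_mul_pow_mul_pow hK hx hy

end Phi1

theorem stmt9_general (q q1 A B C x y : ℂ)
    (hq1 : ‖q‖ < 1)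
    (hq11 : ‖q1‖ < 1)
    (hC : ∀ n : ℕ, qPoch q C n ≠ 0)
    (hx : ‖x‖ < 1) (hy : ‖y‖ < 1) :
    (1 - B) * Phi1 q q1 A (q1 * B) C x y
        + B * Phi1 q q1 A B C (q1 * x) y =
      Phi1 q q1 A B C x y := by
  have hq1x : ‖q1 * x‖ < 1 := by
    rw [norm_mul]
    exact mul_lt_one_of_nonneg_of_lt_one_left (norm_nonneg _) hq11 hx.le
  have hshift := summable_phi1Coeff_mul_pow_mul_pow (A := A) (B := q1 * B) hq1 hq11 hC hx hy
  have hdil := summable_phi1Coeff_mul_pow_mul_pow (A := A) (B := B) hq1 hq11 hC hq1x hy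
  simp only [Phi1_eq_tsum_phi1Coeff]
  rw [← tsum_mul_left, ← tsum_mul_left, ← (hshift.mul_left _).tsum_add (hdil.mul_left _)]
  refine tsum_congr fun p ↦ ?_
  rw [mul_pow]
  linear_combination x ^ p.1 * y ^ p.2 * phi1Coeff_contiguous q q1 A B C p

theorem stmt9 (q q1 A B C x y : ℂ)
    (hq0 : 0 < ‖q‖) (hq1 : ‖q‖ < 1)
    (hq10 : 0 < ‖q1‖) (hq11 : ‖q1‖ < 1)
    (hC : ∀ n : ℕ, qPoch q C n ≠ 0)
    (hx : ‖x‖ < 1) (hy : ‖y‖ < 1) :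
    (1 - B) * Phi1 q q1 A (q1 * B) C x y
        + B * Phi1 q q1 A B C (q1 * x) y =
      Phi1 q q1 A B C x y :=
  stmt9_general q q1 A B C x y hq1 hq11 hC hx hy
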